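/- arXiv:2212.10110 — 4 statements merged into one kernel-verified Lean document; each statement's English description precedes it below -/
import Mathlib

section
/- Let E and E' be real Banach spaces with cones P ⊆ E and P' ⊆ E' having nonempty interior, and let (X, d_X) be a quasi cone metric space over (E, P) and (Y, d_Y) a quasi cone metric space over (E', P'). If f : X → Y is uniformly continuous, then f is arithmetic ff-continuous. -/
open Pointwise

/-- A cone in a real Banach space `E`: nonempty, closed, not `{0}`, closed under
nonnegative combinations, and `P ∩ (-P) = {0}`. -/
def IsCone {E : Type*} [NormedAddCommGroup E] [NormedSpace ℝ E] (P : Set E) : Prop :=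
  P.Nonempty ∧ IsClosed P ∧ P ≠ {0} ∧
    (∀ x ∈ P, ∀ y ∈ P, ∀ s t : ℝ, 0 ≤ s → 0 ≤ t → s • x + t • y ∈ P) ∧
    P ∩ (-P) = {0}

/-- `a ≤ b` with respect to the cone `P`, i.e. `b - a ∈ P`. -/
def coneLE {E : Type*} [NormedAddCommGroup E] (P : Set E) (a b : E) : Prop :=
  b - a ∈ P

/-- `a ≪ b` with respect to the cone `P`, i.e. `b - a ∈ interior P`. -/
def coneLT {E : Type*} [NormedAddCommGroup E] (P : Set E) (a b : E) : Prop :=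
  b - a ∈ interior P

/-- `(X, d)` is a quasi cone metric space over `(E, P)`. -/
def IsQuasiConeMetric {E X : Type*} [NormedAddCommGroup E]
    (P : Set E) (d : X → X → E) : Prop :=
  (∀ x y : X, coneLE P 0 (d x y)) ∧
  (∀ x y : X, d x y = 0 ↔ x = y) ∧
  (∀ x y z : X, coneLE P (d x y) (d x z + d z y))

/-- A sequence (indexed by positive integers) is forward arithmetic convergent. -/
def ForwardArithConv {E X : Type*} [NormedAddCommGroup E]
    (P : Set E) (d : X → X → E) (x : ℕ+ → X) : Prop :=
  ∀ u : E, coneLT P 0 u → ∃ N : ℕ+, ∀ n m : ℕ+,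
    N ≤ PNat.gcd n m → coneLT P (d (x (PNat.gcd n m)) (x n)) u

/-- A sequence (indexed by positive integers) is backward arithmetic convergent. -/
def BackwardArithConv {E X : Type*} [NormedAddCommGroup E]
    (P : Set E) (d : X → X → E) (x : ℕ+ → X) : Prop :=
  ∀ u : E, coneLT P 0 u → ∃ N : ℕ+, ∀ n m : ℕ+,
    N ≤ PNat.gcd n m → coneLT P (d (x n) (x (PNat.gcd n m))) u

/-- A sequence forward converges to `x₀`. -/
def ForwardConvTo {E X : Type*} [NormedAddCommGroup E]
    (P : Set E) (d : X → X → E) (x : ℕ+ → X) (x₀ : X) : Prop :=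
  ∀ u : E, coneLT P 0 u → ∃ N : ℕ+, ∀ n : ℕ+, N ≤ n → coneLT P (d x₀ (x n)) u

/-- A sequence backward converges to `x₀`. -/
def BackwardConvTo {E X : Type*} [NormedAddCommGroup E]
    (P : Set E) (d : X → X → E) (x : ℕ+ → X) (x₀ : X) : Prop :=
  ∀ u : E, coneLT P 0 u → ∃ N : ℕ+, ∀ n : ℕ+, N ≤ n → coneLT P (d (x n) x₀) u

/-- Forward convergence is equivalent to backward convergence in `(X, d)`. -/
def FwdEqBwdConv {E X : Type*} [NormedAddCommGroup E]
    (P : Set E) (d : X → X → E) : Prop :=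
  ∀ (x : ℕ+ → X) (x₀ : X), ForwardConvTo P d x x₀ ↔ BackwardConvTo P d x x₀

/-- `f : X → Y` is arithmetic ff-continuous. -/
def ArithFFContinuous {E E' X Y : Type*} [NormedAddCommGroup E] [NormedAddCommGroup E']
    (P : Set E) (P' : Set E') (dX : X → X → E) (dY : Y → Y → E') (f : X → Y) : Prop :=
  ∀ x : ℕ+ → X, ForwardArithConv P dX x → ForwardArithConv P' dY (fun n => f (x n))

/-- `f : X → Y` is arithmetic fb-continuous. -/
def ArithFBContinuous {E E' X Y : Type*} [NormedAddCommGroup E] [NormedAddCommGroup E']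
    (P : Set E) (P' : Set E') (dX : X → X → E) (dY : Y → Y → E') (f : X → Y) : Prop :=
  ∀ x : ℕ+ → X, ForwardArithConv P dX x → BackwardArithConv P' dY (fun n => f (x n))

/-- `f : X → Y` is uniformly continuous between quasi cone metric spaces. -/
def QCMUniformlyContinuous {E E' X Y : Type*} [NormedAddCommGroup E] [NormedAddCommGroup E']
    (P : Set E) (P' : Set E') (dX : X → X → E) (dY : Y → Y → E') (f : X → Y) : Prop :=
  ∀ u' : E', coneLT P' 0 u' → ∃ u : E, coneLT P 0 u ∧
    ∀ x y : X, coneLT P (dX x y) u → coneLT P' (dY (f x) (f y)) u'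

/-- A sequence of functions `fₙ : X → Y` is forward arithmetic convergent. -/
def FwdArithConvFunSeq {E' X Y : Type*} [NormedAddCommGroup E']
    (P' : Set E') (dY : Y → Y → E') (fn : ℕ+ → X → Y) : Prop :=
  ∀ u' : E', coneLT P' 0 u' → ∃ n₀ : ℕ+, ∀ (x : X) (n m : ℕ+),
    n₀ ≤ PNat.gcd n m → coneLT P' (dY (fn (PNat.gcd n m) x) (fn n x)) u'

/-- A sequence of functions `fₙ : X → Y` is backward arithmetic convergent. -/
def BwdArithConvFunSeq {E' X Y : Type*} [NormedAddCommGroup E']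
    (P' : Set E') (dY : Y → Y → E') (fn : ℕ+ → X → Y) : Prop :=
  ∀ u' : E', coneLT P' 0 u' → ∃ n₀ : ℕ+, ∀ (x : X) (n m : ℕ+),
    n₀ ≤ PNat.gcd n m → coneLT P' (dY (fn n x) (fn (PNat.gcd n m) x)) u'

/-- `fₙ` forward converges uniformly to `f`. -/
def UnifFwdConv {E' X Y : Type*} [NormedAddCommGroup E']
    (P' : Set E') (dY : Y → Y → E') (fn : ℕ+ → X → Y) (f : X → Y) : Prop :=
  ∀ u' : E', coneLT P' 0 u' → ∃ N : ℕ+, ∀ n : ℕ+, N ≤ n → ∀ x : X,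
    coneLT P' (dY (f x) (fn n x)) u'

/-- `f : X → Y` is forward (cAC)-continuous. -/
def ForwardCACContinuous {E E' X Y : Type*} [NormedAddCommGroup E] [NormedAddCommGroup E']
    (P : Set E) (P' : Set E') (dX : X → X → E) (dY : Y → Y → E') (f : X → Y) : Prop :=
  ∀ (x : ℕ+ → X) (x₀ : X), ForwardConvTo P dX x x₀ →
    ForwardArithConv P' dY (fun n => f (x n))

/-- `B` is forward arithmetic compact. -/
def ForwardArithCompact {E X : Type*} [NormedAddCommGroup E]
    (P : Set E) (d : X → X → E) (B : Set X) : Prop :=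
  ∀ x : ℕ+ → X, (∀ n, x n ∈ B) → ∃ φ : ℕ+ → ℕ+, StrictMono φ ∧
    ForwardArithConv P d (fun n => x (φ n))

/-- `B` is backward arithmetic compact. -/
def BackwardArithCompact {E X : Type*} [NormedAddCommGroup E]
    (P : Set E) (d : X → X → E) (B : Set X) : Prop :=
  ∀ x : ℕ+ → X, (∀ n, x n ∈ B) → ∃ φ : ℕ+ → ℕ+, StrictMono φ ∧
    BackwardArithConv P d (fun n => x (φ n))

theorem unifCont_arithFFContinuous_general {E E' X Y : Type*}
    [NormedAddCommGroup E] [NormedAddCommGroup E']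
    (P : Set E) (P' : Set E')
    (dX : X → X → E) (dY : Y → Y → E')
    (f : X → Y) (hf : QCMUniformlyContinuous P P' dX dY f) :
    ArithFFContinuous P P' dX dY f := by
  intro x hx u' hu'
  obtain ⟨u, hu, hfu⟩ := hf u' hu'
  obtain ⟨N, hN⟩ := hx u hu
  exact ⟨N, fun n m hnm => hfu _ _ (hN n m hnm)⟩

theorem unifCont_arithFFContinuous {E E' X Y : Type*}
    [NormedAddCommGroup E] [NormedSpace ℝ E] [CompleteSpace E]
    [NormedAddCommGroup E'] [NormedSpace ℝ E'] [CompleteSpace E']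
    (P : Set E) (P' : Set E')
    (hP : IsCone P) (hP' : IsCone P')
    (hPint : (interior P).Nonempty) (hP'int : (interior P').Nonempty)
    (dX : X → X → E) (dY : Y → Y → E')
    (hdX : IsQuasiConeMetric P dX) (hdY : IsQuasiConeMetric P' dY)
    (f : X → Y) (hf : QCMUniformlyContinuous P P' dX dY f) :
    ArithFFContinuous P P' dX dY f :=
  unifCont_arithFFContinuous_general P P' dX dY f hf
end

section
/- Let (X, d_X) be a quasi cone metric space over (E, P) and (Y, d_Y) a quasi cone metric space over (E', P'). Let {f_n} be a forward arithmetic convergent sequence of functions from X to Y, let x₀ ∈ X, and let {y_n} be a sequence in Y such that: (i) for every u ∈ E with 0 ≪ u there exists x ∈ X with d_X(x₀, x) ≪ u; and (ii) for each positive integer n and every u' ∈ E' with 0 ≪ u' there exists u ∈ E with 0 ≪ u such that every x ∈ X with d_X(x₀, x) ≪ u satisfies both d_Y(y_n, f_n(x)) ≪ u' and d_Y(f_n(x), y_n) ≪ u' (i.e., f_n(x) tends to y_n as x tends to x₀). Then the sequence {y_n} is forward arithmetic convergent in Y. -/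
open Pointwise

/-! For `k = gcd(n, m)`, choose one point `x` so close to `x₀` that `f_k x` is within `u/3` of
`y_k` and `f_n x` within `u/3` of `y_n`; such an `x` exists because the sets
`{x | d(x₀, x) ≪ u}` are nonempty and directed downwards in `u`. Then
`d(y_k, y_n) ≤ d(y_k, f_k x) + d(f_k x, f_n x) + d(f_n x, y_n) ≪ u/3 + u/3 + u/3`. -/

namespace IsCone

variable {F : Type*} [NormedAddCommGroup F] [NormedSpace ℝ F] {P : Set F}

theorem add_mem (hP : IsCone P) {a b : F} (ha : a ∈ P) (hb : b ∈ P) : a + b ∈ P := by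
  simpa using hP.2.2.2.1 a ha b hb 1 1 zero_le_one zero_le_one

theorem smul_mem (hP : IsCone P) {a : F} (ha : a ∈ P) {t : ℝ} (ht : 0 ≤ t) : t • a ∈ P := by
  simpa using hP.2.2.2.1 a ha a ha t 0 ht le_rfl

theorem add_mem_interior (hP : IsCone P) {a b : F} (ha : a ∈ interior P) (hb : b ∈ P) :
    a + b ∈ interior P := by
  have hPP : P + P ⊆ P := by
    rintro _ ⟨p, hp, q, hq, rfl⟩
    exact hP.add_mem hp hq
  exact interior_mono hPP (subset_interior_add_left (Set.add_mem_add ha hb))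

theorem smul_mem_interior (hP : IsCone P) {a : F} (ha : a ∈ interior P) {t : ℝ} (ht : 0 < t) :
    t • a ∈ interior P := by
  have htP : t • P ⊆ P := by
    rintro _ ⟨p, hp, rfl⟩
    exact hP.smul_mem hp ht.le
  rw [← Set.smul_mem_smul_set_iff₀ ht.ne', ← interior_smul₀ ht.ne'] at ha
  exact interior_mono htP ha

-- The common lower bound is a small multiple of `u₁`.
theorem exists_mem_interior_sub_mem (hP : IsCone P) {u₁ u₂ : F} (h₁ : u₁ ∈ interior P)
    (h₂ : u₂ ∈ interior P) : ∃ u ∈ interior P, u₁ - u ∈ P ∧ u₂ - u ∈ P := by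
  have hlim : Filter.Tendsto (fun t : ℝ => u₂ - t • u₁) (nhdsWithin 0 (Set.Ioi 0)) (nhds u₂) := by
    have : Continuous fun t : ℝ => u₂ - t • u₁ := by fun_prop
    simpa using (this.tendsto 0).mono_left nhdsWithin_le_nhds
  have hsmall : ∀ᶠ t in nhdsWithin (0 : ℝ) (Set.Ioi 0), t < 1 := by
    simpa using eventually_nhdsWithin_of_eventually_nhds (eventually_lt_nhds zero_lt_one)
  obtain ⟨t, ht₂, ht₁, ht₀⟩ := ((hlim.eventually (isOpen_interior.mem_nhds h₂)).and
    (hsmall.and self_mem_nhdsWithin)).exists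
  refine ⟨t • u₁, hP.smul_mem_interior h₁ ht₀, ?_, interior_subset ht₂⟩
  simpa [sub_smul] using hP.smul_mem (interior_subset h₁) (sub_nonneg.2 ht₁.le)

end IsCone

section ConeOrder

variable {F : Type*} [NormedAddCommGroup F] [NormedSpace ℝ F] {P : Set F}

theorem coneLT_of_coneLT_of_coneLE (hP : IsCone P) {a b c : F} (hab : coneLT P a b)
    (hbc : coneLE P b c) : coneLT P a c := by
  simpa [coneLT] using hP.add_mem_interior hab hbc

theorem coneLT_of_coneLE_of_coneLT (hP : IsCone P) {a b c : F} (hab : coneLE P a b)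
    (hbc : coneLT P b c) : coneLT P a c := by
  simpa [coneLT, add_comm] using hP.add_mem_interior hbc hab

theorem coneLT_add (hP : IsCone P) {a b c d : F} (hab : coneLT P a b) (hcd : coneLT P c d) :
    coneLT P (a + c) (b + d) := by
  have := hP.add_mem_interior hab (interior_subset hcd)
  unfold coneLT
  convert this using 1
  abel

theorem coneLT_zero_inv_smul (hP : IsCone P) {u : F} (hu : coneLT P 0 u) {t : ℝ} (ht : 0 < t) :
    coneLT P 0 (t⁻¹ • u) := by
  simpa [coneLT] using hP.smul_mem_interior (by simpa [coneLT] using hu) (inv_pos.2 ht)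

theorem exists_coneLT_forall_coneLT (hP : IsCone P) {u₁ u₂ : F} (h₁ : coneLT P 0 u₁)
    (h₂ : coneLT P 0 u₂) :
    ∃ u, coneLT P 0 u ∧ ∀ a, coneLT P a u → coneLT P a u₁ ∧ coneLT P a u₂ := by
  obtain ⟨u, hu, hu₁, hu₂⟩ :=
    hP.exists_mem_interior_sub_mem (by simpa [coneLT] using h₁) (by simpa [coneLT] using h₂)
  exact ⟨u, by simpa [coneLT] using hu, fun a ha =>
    ⟨coneLT_of_coneLT_of_coneLE hP ha hu₁, coneLT_of_coneLT_of_coneLE hP ha hu₂⟩⟩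

end ConeOrder

theorem IsQuasiConeMetric.coneLE_add_add {F X : Type*} [NormedAddCommGroup F] [NormedSpace ℝ F]
    {P : Set F} {d : X → X → F} (hd : IsQuasiConeMetric P d) (hP : IsCone P) (a b c e : X) :
    coneLE P (d a e) (d a b + d b c + d c e) := by
  have := hP.add_mem (hd.2.2 a e b) (hd.2.2 b e c)
  unfold coneLE
  convert this using 1
  abel

theorem exists_and_of_forall_coneLT {E X : Type*} [NormedAddCommGroup E] [NormedSpace ℝ E]
    {P : Set E} (hP : IsCone P) {dX : X → X → E} {x₀ : X}
    (happrox : ∀ u : E, coneLT P 0 u → ∃ x : X, coneLT P (dX x₀ x) u) {p q : X → Prop}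
    (hp : ∃ u, coneLT P 0 u ∧ ∀ x, coneLT P (dX x₀ x) u → p x)
    (hq : ∃ u, coneLT P 0 u ∧ ∀ x, coneLT P (dX x₀ x) u → q x) : ∃ x, p x ∧ q x := by
  obtain ⟨u₁, hu₁, hp⟩ := hp
  obtain ⟨u₂, hu₂, hq⟩ := hq
  obtain ⟨u, hu, hle⟩ := exists_coneLT_forall_coneLT hP hu₁ hu₂
  obtain ⟨x, hx⟩ := happrox u hu
  exact ⟨x, hp x (hle _ hx).1, hq x (hle _ hx).2⟩

theorem fwdArithConvFunSeq_limit_general {E E' X Y : Type*}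
    [NormedAddCommGroup E] [NormedSpace ℝ E]
    [NormedAddCommGroup E'] [NormedSpace ℝ E']
    (P : Set E) (P' : Set E')
    (hP : IsCone P) (hP' : IsCone P')
    (dX : X → X → E) (dY : Y → Y → E')
    (hdY : IsQuasiConeMetric P' dY)
    (fn : ℕ+ → X → Y) (hfn : FwdArithConvFunSeq P' dY fn)
    (x₀ : X) (y : ℕ+ → Y)
    (happrox : ∀ u : E, coneLT P 0 u → ∃ x : X, coneLT P (dX x₀ x) u)
    (hlim : ∀ n : ℕ+, ∀ u' : E', coneLT P' 0 u' → ∃ u : E, coneLT P 0 u ∧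
      ∀ x : X, coneLT P (dX x₀ x) u →
        coneLT P' (dY (y n) (fn n x)) u' ∧ coneLT P' (dY (fn n x) (y n)) u') :
    ForwardArithConv P' dY y := by
  intro u hu
  set v : E' := (3 : ℝ)⁻¹ • u
  have hv : coneLT P' 0 v := coneLT_zero_inv_smul hP' hu three_pos
  obtain ⟨N, hN⟩ := hfn v hv
  refine ⟨N, fun n m hnm => ?_⟩
  set k := n.gcd m
  obtain ⟨x, ⟨hxk, -⟩, ⟨-, hxn⟩⟩ :=
    exists_and_of_forall_coneLT hP happrox (hlim k v hv) (hlim n v hv)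
  have hsum : coneLT P' (dY (y k) (fn k x) + dY (fn k x) (fn n x) + dY (fn n x) (y n)) u := by
    convert coneLT_add hP' (coneLT_add hP' hxk (hN x n m hnm)) hxn using 1
    module
  exact coneLT_of_coneLE_of_coneLT hP' (hdY.coneLE_add_add hP' _ _ _ _) hsum

theorem fwdArithConvFunSeq_limit {E E' X Y : Type*}
    [NormedAddCommGroup E] [NormedSpace ℝ E] [CompleteSpace E]
    [NormedAddCommGroup E'] [NormedSpace ℝ E'] [CompleteSpace E']
    (P : Set E) (P' : Set E')
    (hP : IsCone P) (hP' : IsCone P')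
    (hPint : (interior P).Nonempty) (hP'int : (interior P').Nonempty)
    (dX : X → X → E) (dY : Y → Y → E')
    (hdX : IsQuasiConeMetric P dX) (hdY : IsQuasiConeMetric P' dY)
    (fn : ℕ+ → X → Y) (hfn : FwdArithConvFunSeq P' dY fn)
    (x₀ : X) (y : ℕ+ → Y)
    (happrox : ∀ u : E, coneLT P 0 u → ∃ x : X, coneLT P (dX x₀ x) u)
    (hlim : ∀ n : ℕ+, ∀ u' : E', coneLT P' 0 u' → ∃ u : E, coneLT P 0 u ∧
      ∀ x : X, coneLT P (dX x₀ x) u →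
        coneLT P' (dY (y n) (fn n x)) u' ∧ coneLT P' (dY (fn n x) (y n)) u') :
    ForwardArithConv P' dY y :=
  fwdArithConvFunSeq_limit_general P P' hP hP' dX dY hdY fn hfn x₀ y happrox hlim
end

section
/- Let (X, d_X) be a quasi cone metric space over (E, P) and (Y, d_Y) a quasi cone metric space over (E', P') in which forward convergence is equivalent to backward convergence. If {f_n} is a sequence of forward (cAC)-continuous functions from X to Y that forward converges uniformly to a function f : X → Y, then f is forward (cAC)-continuous. -/
open Pointwise

/-!
Let `xₙ → x₀` forward. Interleaving `x₀` with the `xₙ` gives a sequence `z` with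
`z (2n - 1) = xₙ` and `z (2(2n - 1)) = x₀` that still forward converges to `x₀`; since
`gcd (2(2n - 1), 2n - 1) = 2n - 1`, forward arithmetic convergence of `fₖ ∘ z` says exactly
that `fₖ (xₙ)` backward converges to `fₖ (x₀)`. A 3ε-argument with the uniform limit gives
`f (xₙ) → f (x₀)` backward, hence also forward, and a sequence converging to `y` in both
directions is forward arithmetic convergent by the triangle inequality through `y`.
-/

section Cone

variable {E : Type*} [NormedAddCommGroup E] [NormedSpace ℝ E] {P : Set E}

theorem IsCone.add_mem_s7 (hP : IsCone P) {a b : E} (ha : a ∈ P) (hb : b ∈ P) : a + b ∈ P := by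
  simpa using hP.2.2.2.1 a ha b hb 1 1 zero_le_one zero_le_one

theorem IsCone.smul_mem_s7 (hP : IsCone P) {a : E} {t : ℝ} (ht : 0 ≤ t) (ha : a ∈ P) :
    t • a ∈ P := by
  simpa using hP.2.2.2.1 a ha a ha t 0 ht le_rfl

theorem IsCone.add_mem_interior_s7 (hP : IsCone P) {a b : E} (ha : a ∈ interior P) (hb : b ∈ P) :
    a + b ∈ interior P := by
  rw [mem_interior] at ha ⊢
  obtain ⟨U, hUP, hUo, haU⟩ := ha
  refine ⟨(· + b) '' U, ?_, isOpenMap_add_right b U hUo, ⟨a, haU, rfl⟩⟩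
  rintro _ ⟨v, hv, rfl⟩
  exact hP.add_mem_s7 (hUP hv) hb

theorem IsCone.smul_mem_interior_s7 (hP : IsCone P) {a : E} {t : ℝ} (ht : 0 < t)
    (ha : a ∈ interior P) : t • a ∈ interior P := by
  rw [mem_interior] at ha ⊢
  obtain ⟨U, hUP, hUo, haU⟩ := ha
  refine ⟨(t • ·) '' U, ?_, isOpenMap_smul₀ ht.ne' U hUo, ⟨a, haU, rfl⟩⟩
  rintro _ ⟨v, hv, rfl⟩
  exact hP.smul_mem_s7 ht.le (hUP hv)

theorem IsCone.coneLT_zero_smul (hP : IsCone P) {u : E} (hu : coneLT P 0 u) {t : ℝ}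
    (ht : 0 < t) : coneLT P 0 (t • u) := by
  unfold coneLT at hu ⊢
  rw [sub_zero] at hu ⊢
  exact hP.smul_mem_interior_s7 ht hu

theorem IsCone.coneLT_add_of_coneLE_add (hP : IsCone P) {a b c u v : E}
    (h : coneLE P a (b + c)) (hb : coneLT P b u) (hc : coneLT P c v) : coneLT P a (u + v) := by
  have hsplit : u + v - a = (u - b) + ((v - c) + (b + c - a)) := by abel
  unfold coneLT
  rw [hsplit]
  exact hP.add_mem_interior_s7 hb (hP.add_mem_s7 (interior_subset hc) h)

theorem IsQuasiConeMetric.coneLT_add {X : Type*} {d : X → X → E} (hd : IsQuasiConeMetric P d)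
    (hP : IsCone P) {x y z : X} {u v : E} (hxz : coneLT P (d x z) u) (hzy : coneLT P (d z y) v) :
    coneLT P (d x y) (u + v) :=
  hP.coneLT_add_of_coneLE_add (hd.2.2 x y z) hxz hzy

end Cone

section Sequences

variable {E X : Type*} [NormedAddCommGroup E] {P : Set E} {d : X → X → E}

theorem ForwardArithConv.of_convTo [NormedSpace ℝ E] (hP : IsCone P)
    (hd : IsQuasiConeMetric P d) {x : ℕ+ → X} {y : X} (hb : BackwardConvTo P d x y)
    (hf : ForwardConvTo P d x y) : ForwardArithConv P d x := by
  intro u hu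
  obtain ⟨N₁, h₁⟩ := hb _ (hP.coneLT_zero_smul hu one_half_pos)
  obtain ⟨N₂, h₂⟩ := hf _ (hP.coneLT_zero_smul hu one_half_pos)
  refine ⟨N₁ ⊔ N₂, fun n m hN => ?_⟩
  have hgcd_le : PNat.gcd n m ≤ n := PNat.le_of_dvd (PNat.gcd_dvd_left n m)
  have h := hd.coneLT_add hP (h₁ _ (le_sup_left.trans hN))
    (h₂ n (le_sup_right.trans (hN.trans hgcd_le)))
  rwa [← add_smul, add_halves, one_smul] at h

/-- The sequence `x₁, x₀, x₂, x₀, x₃, …`. -/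
def interleave (x₀ : X) (x : ℕ+ → X) (j : ℕ+) : X :=
  if Even (j : ℕ) then x₀ else x (j.natPred / 2).succPNat

def oddPNat (n : ℕ+) : ℕ+ := (2 * n.natPred).succPNat

theorem interleave_oddPNat (x₀ : X) (x : ℕ+ → X) (n : ℕ+) :
    interleave x₀ x (oddPNat n) = x n := by
  have hodd : ¬ Even (2 * n.natPred + 1) := Nat.not_even_iff_odd.2 (odd_two_mul_add_one _)
  simp [interleave, oddPNat, hodd]

theorem interleave_two_mul (x₀ : X) (x : ℕ+ → X) (j : ℕ+) : interleave x₀ x (2 * j) = x₀ := by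
  simp [interleave]

theorem le_oddPNat (n : ℕ+) : n ≤ oddPNat n := by
  rw [← PNat.coe_le_coe, oddPNat, Nat.succPNat_coe, ← n.natPred_add_one]
  omega

theorem ForwardConvTo.interleave {x : ℕ+ → X} {x₀ : X} (hx : ForwardConvTo P d x x₀)
    (hd : d x₀ x₀ = 0) : ForwardConvTo P d (interleave x₀ x) x₀ := by
  intro u hu
  obtain ⟨N, hN⟩ := hx u hu
  refine ⟨2 * N, fun j hj => ?_⟩
  unfold _root_.interleave
  split_ifs with heven
  · rwa [hd]
  · apply hN
    have hj' : 2 * (N : ℕ) ≤ j.natPred + 1 := by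
      simpa using (PNat.coe_le_coe _ _).2 hj
    rw [← j.natPred_add_one, Nat.even_add_one, not_not] at heven
    obtain ⟨k, hk⟩ := heven
    rw [← PNat.coe_le_coe, Nat.succPNat_coe]
    omega

end Sequences

theorem ForwardCACContinuous.backwardConvTo {E E' X Y : Type*} [NormedAddCommGroup E]
    [NormedAddCommGroup E'] {P : Set E} {P' : Set E'} {dX : X → X → E} {dY : Y → Y → E'}
    {g : X → Y} (hg : ForwardCACContinuous P P' dX dY g) (hdX : ∀ x, dX x x = 0)
    {x : ℕ+ → X} {x₀ : X} (hx : ForwardConvTo P dX x x₀) :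
    BackwardConvTo P' dY (fun n => g (x n)) (g x₀) := by
  intro u hu
  obtain ⟨M, hM⟩ := hg _ x₀ (hx.interleave (hdX x₀)) u hu
  refine ⟨M, fun n hn => ?_⟩
  have hgcd : PNat.gcd (2 * oddPNat n) (oddPNat n) = oddPNat n :=
    PNat.coe_injective (Nat.gcd_eq_right (dvd_mul_left _ _))
  have h := hM (2 * oddPNat n) (oddPNat n) (by rw [hgcd]; exact hn.trans (le_oddPNat n))
  simpa only [hgcd, interleave_oddPNat, interleave_two_mul] using h

theorem UnifFwdConv.forwardConvTo {E' X Y : Type*} [NormedAddCommGroup E'] {P' : Set E'}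
    {dY : Y → Y → E'} {fn : ℕ+ → X → Y} {f : X → Y} (hconv : UnifFwdConv P' dY fn f) (x : X) :
    ForwardConvTo P' dY (fun k => fn k x) (f x) := fun u hu =>
  let ⟨N, hN⟩ := hconv u hu
  ⟨N, fun n hn => hN n hn x⟩

theorem UnifFwdConv.backwardConvTo_comp {E' X Y : Type*} [NormedAddCommGroup E']
    [NormedSpace ℝ E'] {P' : Set E'} {dY : Y → Y → E'} (hP' : IsCone P')
    (hdY : IsQuasiConeMetric P' dY) (hYfb : FwdEqBwdConv P' dY) {fn : ℕ+ → X → Y} {f : X → Y}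
    (hconv : UnifFwdConv P' dY fn f) {x : ℕ+ → X} {x₀ : X}
    (hk : ∀ k, BackwardConvTo P' dY (fun n => fn k (x n)) (fn k x₀)) :
    BackwardConvTo P' dY (fun n => f (x n)) (f x₀) := by
  intro u hu
  have hu3 : coneLT P' 0 ((1 / 3 : ℝ) • u) := hP'.coneLT_zero_smul hu (by norm_num)
  obtain ⟨K₁, hK₁⟩ := (hYfb _ _).1 (hconv.forwardConvTo x₀) _ hu3
  obtain ⟨K₂, hK₂⟩ := hconv _ hu3
  obtain ⟨N, hN⟩ := hk (K₁ ⊔ K₂) _ hu3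
  refine ⟨N, fun n hn => ?_⟩
  have h := hdY.coneLT_add hP' (hK₂ _ le_sup_right (x n))
    (hdY.coneLT_add hP' (hN n hn) (hK₁ _ le_sup_left))
  have hthirds : (1 / 3 : ℝ) • u + ((1 / 3 : ℝ) • u + (1 / 3 : ℝ) • u) = u := by module
  rwa [hthirds] at h

theorem unifFwdLimit_forwardCACContinuous_general {E E' X Y : Type*}
    [NormedAddCommGroup E]
    [NormedAddCommGroup E'] [NormedSpace ℝ E']
    (P : Set E) (P' : Set E')
    (hP' : IsCone P')
    (dX : X → X → E) (dY : Y → Y → E')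
    (hdX : IsQuasiConeMetric P dX) (hdY : IsQuasiConeMetric P' dY)
    (hYfb : FwdEqBwdConv P' dY)
    (fn : ℕ+ → X → Y) (hfn : ∀ n : ℕ+, ForwardCACContinuous P P' dX dY (fn n))
    (f : X → Y) (hconv : UnifFwdConv P' dY fn f) :
    ForwardCACContinuous P P' dX dY f := by
  intro x x₀ hx
  have hbwd : BackwardConvTo P' dY (fun n => f (x n)) (f x₀) :=
    hconv.backwardConvTo_comp hP' hdY hYfb fun k =>
      (hfn k).backwardConvTo (fun x => (hdX.2.1 x x).2 rfl) hx
  exact ForwardArithConv.of_convTo hP' hdY hbwd ((hYfb _ _).2 hbwd)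

theorem unifFwdLimit_forwardCACContinuous {E E' X Y : Type*}
    [NormedAddCommGroup E] [NormedSpace ℝ E] [CompleteSpace E]
    [NormedAddCommGroup E'] [NormedSpace ℝ E'] [CompleteSpace E']
    (P : Set E) (P' : Set E')
    (hP : IsCone P) (hP' : IsCone P')
    (hPint : (interior P).Nonempty) (hP'int : (interior P').Nonempty)
    (dX : X → X → E) (dY : Y → Y → E')
    (hdX : IsQuasiConeMetric P dX) (hdY : IsQuasiConeMetric P' dY)
    (hYfb : FwdEqBwdConv P' dY)
    (fn : ℕ+ → X → Y) (hfn : ∀ n : ℕ+, ForwardCACContinuous P P' dX dY (fn n))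
    (f : X → Y) (hconv : UnifFwdConv P' dY fn f) :
    ForwardCACContinuous P P' dX dY f :=
  unifFwdLimit_forwardCACContinuous_general P P' hP' dX dY hdX hdY hYfb fn hfn f hconv
end

section
/- Let (X, d_X) be a quasi cone metric space over (E, P) and (Y, d_Y) a quasi cone metric space over (E', P'). If B ⊆ X is forward arithmetic compact and f : X → Y is arithmetic ff-continuous, then the image f(B) is forward arithmetic compact in Y. -/
open Pointwise

theorem image_forwardArithCompact_general {E E' X Y : Type*}
    [NormedAddCommGroup E]
    [NormedAddCommGroup E']
    (P : Set E) (P' : Set E')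
    (dX : X → X → E) (dY : Y → Y → E')
    (B : Set X) (hB : ForwardArithCompact P dX B)
    (f : X → Y) (hf : ArithFFContinuous P P' dX dY f) :
    ForwardArithCompact P' dY (f '' B) := by
  intro y hy
  choose x hxB hfx using hy
  obtain ⟨φ, hφ, hconv⟩ := hB x hxB
  refine ⟨φ, hφ, ?_⟩
  simpa only [hfx] using hf (fun n => x (φ n)) hconv

theorem image_forwardArithCompact {E E' X Y : Type*}
    [NormedAddCommGroup E] [NormedSpace ℝ E] [CompleteSpace E]
    [NormedAddCommGroup E'] [NormedSpace ℝ E'] [CompleteSpace E']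
    (P : Set E) (P' : Set E')
    (hP : IsCone P) (hP' : IsCone P')
    (hPint : (interior P).Nonempty) (hP'int : (interior P').Nonempty)
    (dX : X → X → E) (dY : Y → Y → E')
    (hdX : IsQuasiConeMetric P dX) (hdY : IsQuasiConeMetric P' dY)
    (B : Set X) (hB : ForwardArithCompact P dX B)
    (f : X → Y) (hf : ArithFFContinuous P P' dX dY f) :
    ForwardArithCompact P' dY (f '' B) :=
  image_forwardArithCompact_general P P' dX dY B hB f hf
end
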